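/- The map g ↦ π·τ(g) − τ'(g) is a surjective group homomorphism from G to ℝ; that is, for all g, h ∈ G one has (πτ − τ')(g ∘ h) = (πτ − τ')(g) + (πτ − τ')(h), and for every s ∈ ℝ there exists g ∈ G with π·τ(g) − τ'(g) = s. -/

import Mathlib

open MeasureTheory

noncomputable section

/-- The closed unit disk in `ℝ²`. -/
def Disk : Set (ℝ × ℝ) := {p | p.1 ^ 2 + p.2 ^ 2 ≤ 1}

/-- The boundary circle `∂D` of the unit disk. -/
def Bdry : Set (ℝ × ℝ) := {p | p.1 ^ 2 + p.2 ^ 2 = 1}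

/-- A symplectomorphism of the closed unit disk `D`: a bijection of `D` which, together
with its inverse, extends to a `C^∞` map on an open neighborhood of `D`, and whose
Jacobian determinant equals `1` at every point of `D`. -/
structure SympD where
  toFun : ℝ × ℝ → ℝ × ℝ
  invFun : ℝ × ℝ → ℝ × ℝ
  mapsTo : Set.MapsTo toFun Disk Disk
  invMapsTo : Set.MapsTo invFun Disk Disk
  leftInv : ∀ p ∈ Disk, invFun (toFun p) = p
  rightInv : ∀ p ∈ Disk, toFun (invFun p) = p
  smooth : ∃ U : Set (ℝ × ℝ), IsOpen U ∧ Disk ⊆ U ∧ ContDiffOn ℝ (⊤ : ℕ∞) toFun U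
  invSmooth : ∃ U : Set (ℝ × ℝ), IsOpen U ∧ Disk ⊆ U ∧ ContDiffOn ℝ (⊤ : ℕ∞) invFun U
  areaPreserving : ∀ p ∈ Disk,
    (fderiv ℝ toFun p (1, 0)).1 * (fderiv ℝ toFun p (0, 1)).2
      - (fderiv ℝ toFun p (0, 1)).1 * (fderiv ℝ toFun p (1, 0)).2 = 1

/-- `g ∈ H_rel`: the restriction of `g` to the boundary circle is the identity. -/
def IsRel (g : SympD) : Prop := ∀ p ∈ Bdry, g.toFun p = p

/-- `g ∈ G`: `g` fixes the origin. -/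
def FixesOrigin (g : SympD) : Prop := g.toFun (0, 0) = (0, 0)

/-- `g ∈ G_rel = G ∩ H_rel`. -/
def IsGrel (g : SympD) : Prop := FixesOrigin g ∧ IsRel g

/-- `gh` coincides on `D` with the composite `g ∘ h`. -/
def IsComp (g h gh : SympD) : Prop := ∀ p ∈ Disk, gh.toFun p = g.toFun (h.toFun p)

/-- The 1-cochain `τ(g) = ∫_γ (g*η − η) = ∫₀¹ ½(g₁ ∂₁g₂ − g₂ ∂₁g₁)(t,0) dt`,
where `γ(t) = (t,0)` and `η = (x dy − y dx)/2` vanishes along `γ`. -/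
def tau (g : SympD) : ℝ :=
  ∫ t in (0:ℝ)..1, (1 / 2) *
    ((g.toFun (t, 0)).1 * (fderiv ℝ g.toFun (t, 0) (1, 0)).2
      - (g.toFun (t, 0)).2 * (fderiv ℝ g.toFun (t, 0) (1, 0)).1)

/-- `φ : ℝ → ℝ` is a lift of the boundary restriction `g|_{∂D}`. -/
def IsLift (g : SympD) (φ : ℝ → ℝ) : Prop :=
  ContDiff ℝ (⊤ : ℕ∞) φ ∧ (∀ θ : ℝ, φ (θ + 2 * Real.pi) = φ θ + 2 * Real.pi) ∧
    ∀ θ : ℝ, g.toFun (Real.cos θ, Real.sin θ) = (Real.cos (φ θ), Real.sin (φ θ))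

/-- `F` is the primitive `F_g` of the closed 1-form `g*η − η` on `D`, normalized by
`F(x₀) = 0` at `x₀ = (1,0)`: it is `C^∞` on a neighborhood of `D` and satisfies
`dF = g*η − η` at every point of `D`. -/
def IsPrimitive (g : SympD) (F : ℝ × ℝ → ℝ) : Prop :=
  (∃ U : Set (ℝ × ℝ), IsOpen U ∧ Disk ⊆ U ∧ ContDiffOn ℝ (⊤ : ℕ∞) F U) ∧
  (∀ p ∈ Disk, ∀ v : ℝ × ℝ,
    fderiv ℝ F p v =
      (1 / 2) * ((g.toFun p).1 * (fderiv ℝ g.toFun p v).2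
        - (g.toFun p).2 * (fderiv ℝ g.toFun p v).1)
      - (1 / 2) * (p.1 * v.2 - p.2 * v.1)) ∧
  F (1, 0) = 0

/-- `κ(g) = −∫_{∂D} F_g η = −½ ∫₀^{2π} F_g(cos θ, sin θ) dθ`, expressed in terms of a
chosen primitive `F = F_g`. -/
def kappaOf (F : ℝ × ℝ → ℝ) : ℝ :=
  -(1 / 2) * ∫ θ in (0:ℝ)..(2 * Real.pi), F (Real.cos θ, Real.sin θ)

/-- The 1-cochain `τ₀(g) = ∫_D g*η ∧ η
 = ∬_D ¼[(g₁ ∂ₓg₂ − g₂ ∂ₓg₁)x + (g₁ ∂_yg₂ − g₂ ∂_yg₁)y] dx dy`. -/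
def tau0 (g : SympD) : ℝ :=
  ∫ p in Disk, (1 / 4) *
    (((g.toFun p).1 * (fderiv ℝ g.toFun p (1, 0)).2
        - (g.toFun p).2 * (fderiv ℝ g.toFun p (1, 0)).1) * p.1
      + ((g.toFun p).1 * (fderiv ℝ g.toFun p (0, 1)).2
        - (g.toFun p).2 * (fderiv ℝ g.toFun p (0, 1)).1) * p.2)

open Real

/-! ### Basic facts about the disk -/

lemma mem_disk {p : ℝ × ℝ} : p ∈ Disk ↔ p.1 ^ 2 + p.2 ^ 2 ≤ 1 := Iff.rfl

lemma isClosed_disk : IsClosed Disk := by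
  have : Disk = (fun p : ℝ × ℝ => p.1 ^ 2 + p.2 ^ 2) ⁻¹' (Set.Iic 1) := rfl
  rw [this]
  exact IsClosed.preimage (by fun_prop) isClosed_Iic

lemma measurableSet_disk : MeasurableSet Disk := isClosed_disk.measurableSet

lemma isCompact_disk : IsCompact Disk := by
  apply Metric.isCompact_of_isClosed_isBounded isClosed_disk
  apply Bornology.IsBounded.subset (Metric.isBounded_closedBall (x := (0:ℝ×ℝ)) (r := 1))
  intro p hp
  rw [mem_disk] at hp
  have h1 : |p.1| ≤ 1 := abs_le.mpr ⟨by nlinarith [sq_nonneg p.2], by nlinarith [sq_nonneg p.2]⟩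
  have h2 : |p.2| ≤ 1 := abs_le.mpr ⟨by nlinarith [sq_nonneg p.1], by nlinarith [sq_nonneg p.1]⟩
  rw [Metric.mem_closedBall, dist_zero_right, Prod.norm_def]
  simp only [Real.norm_eq_abs]
  exact max_le h1 h2

def OpenDisk : Set (ℝ × ℝ) := {p | p.1 ^ 2 + p.2 ^ 2 < 1}

lemma isOpen_openDisk : IsOpen OpenDisk := by
  have : OpenDisk = (fun p : ℝ × ℝ => p.1 ^ 2 + p.2 ^ 2) ⁻¹' (Set.Iio 1) := rfl
  rw [this]
  exact IsOpen.preimage (by fun_prop) isOpen_Iio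

lemma openDisk_subset : OpenDisk ⊆ Disk := by
  intro p hp
  rw [mem_disk]
  exact le_of_lt hp

lemma convex_openDisk : Convex ℝ OpenDisk := by
  intro p hp q hq s t hs ht hst
  simp only [OpenDisk, Set.mem_setOf_eq] at *
  simp only [Prod.fst_add, Prod.snd_add, Prod.smul_fst, Prod.smul_snd, smul_eq_mul]
  have h1 : s*(p.1^2+p.2^2) + t*(q.1^2+q.2^2) < 1 := by
    rcases eq_or_lt_of_le hs with h | h
    · have ht1 : t = 1 := by linarith
      rw [← h, ht1]; simpa using hq
    · nlinarith [mul_le_mul_of_nonneg_left hq.le ht]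
  nlinarith [mul_nonneg hs ht, sq_nonneg (p.1 - q.1), sq_nonneg (p.2 - q.2)]

lemma circle_mem_disk (θ : ℝ) : (Real.cos θ, Real.sin θ) ∈ Disk := by
  rw [mem_disk]
  simp [Real.cos_sq_add_sin_sq θ]

lemma zero_mem_disk : ((0:ℝ), (0:ℝ)) ∈ Disk := by rw [mem_disk]; norm_num
lemma one_zero_mem_disk : ((1:ℝ), (0:ℝ)) ∈ Disk := by rw [mem_disk]; norm_num

lemma seg_mem_disk {t : ℝ} (h0 : 0 ≤ t) (h1 : t ≤ 1) : ((t:ℝ), (0:ℝ)) ∈ Disk := by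
  rw [mem_disk]; simp only; nlinarith

/-! ### Determinant of a continuous linear map on `ℝ × ℝ` -/

lemma clm_det (L : (ℝ×ℝ) →L[ℝ] (ℝ×ℝ)) :
    L.det = (L (1,0)).1 * (L (0,1)).2 - (L (0,1)).1 * (L (1,0)).2 := by
  have h : L.det = LinearMap.det (L : (ℝ×ℝ) →ₗ[ℝ] (ℝ×ℝ)) := rfl
  rw [h, ← LinearMap.det_toMatrix (Module.Basis.finTwoProd ℝ), Matrix.det_fin_two]
  simp [LinearMap.toMatrix_apply, Module.Basis.coe_finTwoProd_repr, Module.Basis.finTwoProd_zero,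
    Module.Basis.finTwoProd_one]

/-! ### Smoothness helpers -/

lemma diffAt_of_contDiffOn {E F : Type*} [NormedAddCommGroup E] [NormedSpace ℝ E]
    [NormedAddCommGroup F] [NormedSpace ℝ F]
    {f : E → F} {U : Set E} (hU : IsOpen U) (hf : ContDiffOn ℝ (⊤:ℕ∞) f U)
    {p : E} (hp : p ∈ U) : DifferentiableAt ℝ f p :=
  (hf.contDiffAt (hU.mem_nhds hp)).differentiableAt (by norm_num)

lemma SympD.diffAt (g : SympD) {p : ℝ × ℝ} (hp : p ∈ Disk) :
    DifferentiableAt ℝ g.toFun p := by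
  obtain ⟨U, hU, hDU, hsm⟩ := g.smooth
  exact diffAt_of_contDiffOn hU hsm (hDU hp)

lemma SympD.contAt (g : SympD) {p : ℝ × ℝ} (hp : p ∈ Disk) :
    ContinuousAt g.toFun p := (g.diffAt hp).continuousAt

lemma primitive_diffAt {g : SympD} {F : ℝ × ℝ → ℝ} (hF : IsPrimitive g F)
    {p : ℝ × ℝ} (hp : p ∈ Disk) : DifferentiableAt ℝ F p := by
  obtain ⟨⟨U, hU, hDU, hsm⟩, _, _⟩ := hF
  exact diffAt_of_contDiffOn hU hsm (hDU hp)

lemma primitive_contAt {g : SympD} {F : ℝ × ℝ → ℝ} (hF : IsPrimitive g F)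
    {p : ℝ × ℝ} (hp : p ∈ Disk) : ContinuousAt F p := (primitive_diffAt hF hp).continuousAt

/-! ### The Green / divergence identity on the disk, via polar coordinates -/

lemma green {Φ : ℝ × ℝ → ℝ} {U : Set (ℝ × ℝ)} (hU : IsOpen U) (hDU : Disk ⊆ U)
    (hΦ : ContDiffOn ℝ (⊤:ℕ∞) Φ U) :
    ∫ p in Disk, (2 * Φ p + fderiv ℝ Φ p p) =
      ∫ θ in (0:ℝ)..(2 * Real.pi), Φ (Real.cos θ, Real.sin θ) := by
  set W : ℝ × ℝ → ℝ := fun p => 2 * Φ p + fderiv ℝ Φ p p with hW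
  -- continuity of W on U
  have hfd : ContinuousOn (fderiv ℝ Φ) U := hΦ.continuousOn_fderiv_of_isOpen hU (by norm_num)
  have hWc : ContinuousOn W U := by
    apply ContinuousOn.add
    · exact (hΦ.continuousOn.const_smul 2).congr (fun x _ => by simp [smul_eq_mul])
    · exact hfd.clm_apply continuousOn_id
  -- pass to polar coordinates
  have hsymm : ∀ q : ℝ × ℝ, polarCoord.symm q = (q.1 * Real.cos q.2, q.1 * Real.sin q.2) :=
    fun q => rfl
  have htarget : polarCoord.target = Set.Ioi (0:ℝ) ×ˢ Set.Ioo (-Real.pi) Real.pi := rfl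
  have key := integral_comp_polarCoord_symm (Disk.indicator W)
  rw [integral_indicator measurableSet_disk] at key
  rw [← key]
  set S : Set (ℝ × ℝ) := Set.Ioc (0:ℝ) 1 ×ˢ Set.Ioo (-Real.pi) Real.pi with hSdef
  have hmeas : MeasurableSet polarCoord.target := by
    rw [htarget]; exact measurableSet_Ioi.prod measurableSet_Ioo
  have hS : MeasurableSet S := measurableSet_Ioc.prod measurableSet_Ioo
  have hSsub : S ⊆ polarCoord.target := by
    rw [htarget]
    exact Set.prod_mono Set.Ioc_subset_Ioi_self subset_rfl
  have step1 : (∫ q in polarCoord.target, q.1 • (Disk.indicator W) (polarCoord.symm q)) =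
      ∫ q in S, q.1 * W (q.1 * Real.cos q.2, q.1 * Real.sin q.2) := by
    rw [setIntegral_congr_fun hmeas
      (g := S.indicator (fun q => q.1 * W (q.1 * Real.cos q.2, q.1 * Real.sin q.2))) ?_]
    · rw [setIntegral_indicator hS, Set.inter_eq_self_of_subset_right hSsub]
    · intro q hq
      rw [htarget] at hq
      obtain ⟨hq1, hq2⟩ := hq
      simp only [Set.mem_Ioi] at hq1
      have hcs := Real.cos_sq_add_sin_sq q.2
      have hval : (q.1 * Real.cos q.2) ^ 2 + (q.1 * Real.sin q.2) ^ 2 = q.1 ^ 2 := by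
        linear_combination q.1 ^ 2 * hcs
      dsimp only
      by_cases hle : q.1 ≤ 1
      · have hmem : polarCoord.symm q ∈ Disk := by
          rw [hsymm, mem_disk]; simp only [hval]; nlinarith
        have hmemS : q ∈ S := ⟨⟨hq1, hle⟩, hq2⟩
        rw [Set.indicator_of_mem hmem, Set.indicator_of_mem hmemS, hsymm, smul_eq_mul]
      · push_neg at hle
        have hmem : polarCoord.symm q ∉ Disk := by
          rw [hsymm, mem_disk]; simp only [hval]; push_neg; nlinarith
        have hmemS : q ∉ S := fun h => absurd h.1.2 (not_le.mpr hle)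
        rw [Set.indicator_of_notMem hmem, Set.indicator_of_notMem hmemS, smul_zero]
  rw [step1]
  -- integrability on the rectangle
  have hmapsTo : ∀ q : ℝ × ℝ, q ∈ Set.Icc (0:ℝ) 1 ×ˢ Set.Icc (-Real.pi) Real.pi →
      ((q.1 * Real.cos q.2, q.1 * Real.sin q.2) : ℝ × ℝ) ∈ Disk := by
    intro q hq
    obtain ⟨⟨h0, h1⟩, _⟩ := hq
    have hcs := Real.cos_sq_add_sin_sq q.2
    have hval : (q.1 * Real.cos q.2) ^ 2 + (q.1 * Real.sin q.2) ^ 2 = q.1 ^ 2 := by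
      linear_combination q.1 ^ 2 * hcs
    rw [mem_disk]; simp only [hval]; nlinarith
  have hcontf : ContinuousOn (fun q : ℝ × ℝ => q.1 * W (q.1 * Real.cos q.2, q.1 * Real.sin q.2))
      (Set.Icc (0:ℝ) 1 ×ˢ Set.Icc (-Real.pi) Real.pi) := by
    apply ContinuousOn.mul (continuous_fst.continuousOn)
    exact ContinuousOn.comp hWc
      (Continuous.continuousOn (by fun_prop))
      (fun q hq => hDU (hmapsTo q hq))
  have hIntf : IntegrableOn (fun q : ℝ × ℝ => q.1 * W (q.1 * Real.cos q.2, q.1 * Real.sin q.2))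
      S := by
    apply IntegrableOn.mono_set
      (hcontf.integrableOn_compact (isCompact_Icc.prod isCompact_Icc))
    exact Set.prod_mono Set.Ioc_subset_Icc_self Set.Ioo_subset_Icc_self
  have hIntf' : IntegrableOn (fun q : ℝ × ℝ => q.1 * W (q.1 * Real.cos q.2, q.1 * Real.sin q.2))
      S (volume.prod volume) := by rwa [← Measure.volume_eq_prod]
  rw [Measure.volume_eq_prod, setIntegral_prod _ hIntf']
  -- swap the order of integration
  have hInt' : Integrable (Function.uncurry fun r θ : ℝ =>
      r * W (r * Real.cos θ, r * Real.sin θ))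
      ((volume.restrict (Set.Ioc (0:ℝ) 1)).prod (volume.restrict (Set.Ioo (-Real.pi) Real.pi))) := by
    rw [Measure.prod_restrict]
    exact hIntf
  rw [show (∫ r in Set.Ioc (0:ℝ) 1, ∫ θ in Set.Ioo (-Real.pi) Real.pi,
      (r * W (r * Real.cos θ, r * Real.sin θ))) =
      ∫ θ in Set.Ioo (-Real.pi) Real.pi, ∫ r in Set.Ioc (0:ℝ) 1,
      (r * W (r * Real.cos θ, r * Real.sin θ)) from integral_integral_swap hInt']
  -- inner integral via FTC
  have inner : ∀ θ : ℝ, (∫ r in Set.Ioc (0:ℝ) 1, r * W (r * Real.cos θ, r * Real.sin θ))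
      = Φ (Real.cos θ, Real.sin θ) := by
    intro θ
    rw [← intervalIntegral.integral_of_le (by norm_num : (0:ℝ) ≤ 1)]
    have hcs := Real.cos_sq_add_sin_sq θ
    have hderiv : ∀ r ∈ Set.uIcc (0:ℝ) 1,
        HasDerivAt (fun r : ℝ => r^2 * Φ (r * Real.cos θ, r * Real.sin θ))
          (r * W (r * Real.cos θ, r * Real.sin θ)) r := by
      intro r hr
      rw [Set.uIcc_of_le (by norm_num : (0:ℝ) ≤ 1)] at hr
      have hvalr : (r * Real.cos θ) ^ 2 + (r * Real.sin θ) ^ 2 = r ^ 2 := by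
        linear_combination r ^ 2 * hcs
      have hpD : ((r * Real.cos θ, r * Real.sin θ) : ℝ × ℝ) ∈ Disk := by
        rw [mem_disk]; simp only [hvalr]; nlinarith [hr.1, hr.2]
      have hΦd : HasFDerivAt Φ (fderiv ℝ Φ (r * Real.cos θ, r * Real.sin θ))
          (r * Real.cos θ, r * Real.sin θ) :=
        (diffAt_of_contDiffOn hU hΦ (hDU hpD)).hasFDerivAt
      have hline : HasDerivAt (fun r : ℝ => ((r * Real.cos θ, r * Real.sin θ) : ℝ × ℝ))
          ((Real.cos θ, Real.sin θ) : ℝ × ℝ) r := by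
        have h1 : HasDerivAt (fun r : ℝ => r * Real.cos θ) (Real.cos θ) r :=
          by simpa using (hasDerivAt_id r).mul_const (Real.cos θ)
        have h2 : HasDerivAt (fun r : ℝ => r * Real.sin θ) (Real.sin θ) r :=
          by simpa using (hasDerivAt_id r).mul_const (Real.sin θ)
        exact h1.prodMk h2
      have hcomp : HasDerivAt (fun r : ℝ => Φ (r * Real.cos θ, r * Real.sin θ))
          (fderiv ℝ Φ (r * Real.cos θ, r * Real.sin θ) (Real.cos θ, Real.sin θ)) r :=
        hΦd.comp_hasDerivAt r hline
      have hsq : HasDerivAt (fun r : ℝ => r^2) (2*r) r := by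
        simpa using hasDerivAt_pow 2 r
      have hmul : HasDerivAt (fun r : ℝ => r^2 * Φ (r * Real.cos θ, r * Real.sin θ)) _ r :=
        hsq.mul hcomp
      convert hmul using 1
      rw [hW]
      simp only
      have hlin : fderiv ℝ Φ (r * Real.cos θ, r * Real.sin θ)
          (r * Real.cos θ, r * Real.sin θ) =
          r * fderiv ℝ Φ (r * Real.cos θ, r * Real.sin θ) (Real.cos θ, Real.sin θ) := by
        have hv : ((r * Real.cos θ, r * Real.sin θ) : ℝ × ℝ)
            = r • ((Real.cos θ, Real.sin θ) : ℝ × ℝ) := by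
          simp [Prod.smul_mk, smul_eq_mul]
        rw [hv, ContinuousLinearMap.map_smul, smul_eq_mul]
      rw [hlin]; ring
    have hintc : IntervalIntegrable (fun r : ℝ => r * W (r * Real.cos θ, r * Real.sin θ))
        volume 0 1 := by
      apply ContinuousOn.intervalIntegrable
      rw [Set.uIcc_of_le (by norm_num : (0:ℝ) ≤ 1)]
      apply ContinuousOn.mul continuousOn_id
      refine ContinuousOn.comp (f := fun r : ℝ => ((r * Real.cos θ, r * Real.sin θ) : ℝ × ℝ))
        hWc (Continuous.continuousOn (by fun_prop)) ?_
      intro r hr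
      · apply hDU
        have hcs := Real.cos_sq_add_sin_sq θ
        have hvalr : (r * Real.cos θ) ^ 2 + (r * Real.sin θ) ^ 2 = r ^ 2 := by
          linear_combination r ^ 2 * hcs
        rw [mem_disk]; simp only [hvalr]; nlinarith [hr.1, hr.2]
    rw [intervalIntegral.integral_eq_sub_of_hasDerivAt hderiv hintc]
    norm_num
  rw [setIntegral_congr_fun measurableSet_Ioo (fun θ _ => inner θ)]
  -- relate the `Ioo` integral to the interval integral and use periodicity
  have hP : Function.Periodic (fun θ : ℝ => Φ (Real.cos θ, Real.sin θ)) (2 * Real.pi) := by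
    intro θ; simp [Real.cos_add_two_pi, Real.sin_add_two_pi]
  have hper := hP.intervalIntegral_add_eq (-Real.pi) 0
  rw [show -Real.pi + 2 * Real.pi = Real.pi from by ring, zero_add] at hper
  rw [← hper, intervalIntegral.integral_of_le (by linarith [Real.pi_pos]),
    integral_Ioc_eq_integral_Ioo]

/-! ### Areas -/

lemma measure_disk : (volume Disk).toReal = Real.pi := by
  have h := green (Φ := fun _ => (1:ℝ)) (U := Set.univ) isOpen_univ (Set.subset_univ _)
    contDiffOn_const
  simp only [fderiv_fun_const, Pi.zero_apply, ContinuousLinearMap.zero_apply, mul_one,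
    add_zero] at h
  rw [setIntegral_const, intervalIntegral.integral_const] at h
  simp only [smul_eq_mul, sub_zero, mul_one] at h
  rw [measureReal_def] at h
  linarith

lemma integral_const_disk (c : ℝ) : ∫ _ in Disk, c = Real.pi * c := by
  rw [setIntegral_const, measureReal_def, measure_disk, smul_eq_mul]

/-- Explicit "row" continuous linear form on `ℝ × ℝ`. -/
def row (a b : ℝ) : (ℝ × ℝ) →L[ℝ] ℝ :=
  a • ContinuousLinearMap.fst ℝ ℝ ℝ + b • ContinuousLinearMap.snd ℝ ℝ ℝ

@[simp] lemma row_apply (a b : ℝ) (v : ℝ × ℝ) : row a b v = a * v.1 + b * v.2 := by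
  simp [row]

lemma hasFDerivAt_rsq (p : ℝ × ℝ) :
    HasFDerivAt (fun q : ℝ × ℝ => q.1 ^ 2 + q.2 ^ 2) (row (2 * p.1) (2 * p.2)) p := by
  have h1 : HasFDerivAt (fun q : ℝ × ℝ => q.1) (ContinuousLinearMap.fst ℝ ℝ ℝ) p :=
    hasFDerivAt_fst
  have h2 : HasFDerivAt (fun q : ℝ × ℝ => q.2) (ContinuousLinearMap.snd ℝ ℝ ℝ) p :=
    hasFDerivAt_snd
  have h := (h1.mul h1).add (h2.mul h2)
  have hclm : p.1 • ContinuousLinearMap.fst ℝ ℝ ℝ + p.1 • ContinuousLinearMap.fst ℝ ℝ ℝ +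
      (p.2 • ContinuousLinearMap.snd ℝ ℝ ℝ + p.2 • ContinuousLinearMap.snd ℝ ℝ ℝ)
      = row (2 * p.1) (2 * p.2) := by
    apply ContinuousLinearMap.ext
    intro v
    simp [row]
    ring
  have hfun : (fun q : ℝ × ℝ => q.1 ^ 2 + q.2 ^ 2)
      = fun q : ℝ × ℝ => q.1 * q.1 + q.2 * q.2 := by funext q; ring
  rw [hfun, ← hclm]
  exact h

lemma hasFDerivAt_rsq_sq (p : ℝ × ℝ) :
    HasFDerivAt (fun q : ℝ × ℝ => (q.1 ^ 2 + q.2 ^ 2) ^ 2)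
      ((2 * (p.1 ^ 2 + p.2 ^ 2)) • row (2 * p.1) (2 * p.2)) p := by
  have hsq : HasDerivAt (fun z : ℝ => z ^ 2) (2 * (p.1 ^ 2 + p.2 ^ 2))
      (p.1 ^ 2 + p.2 ^ 2) := by simpa using hasDerivAt_pow 2 (p.1 ^ 2 + p.2 ^ 2)
  exact hsq.comp_hasFDerivAt p (hasFDerivAt_rsq p)

lemma integral_rsq_sq_disk : ∫ p in Disk, ((p.1 ^ 2 + p.2 ^ 2) ^ 2 : ℝ) = Real.pi / 3 := by
  have h := green (Φ := fun q : ℝ × ℝ => (q.1 ^ 2 + q.2 ^ 2) ^ 2) (U := Set.univ)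
    isOpen_univ (Set.subset_univ _) (by apply ContDiff.contDiffOn; fun_prop)
  have heq : ∀ p : ℝ × ℝ,
      2 * (p.1 ^ 2 + p.2 ^ 2) ^ 2 + fderiv ℝ (fun q : ℝ × ℝ => (q.1 ^ 2 + q.2 ^ 2) ^ 2) p p
        = 6 * (p.1 ^ 2 + p.2 ^ 2) ^ 2 := by
    intro p
    rw [(hasFDerivAt_rsq_sq p).fderiv]
    simp only [ContinuousLinearMap.smul_apply, row_apply, smul_eq_mul]
    ring
  rw [setIntegral_congr_fun measurableSet_disk (fun p _ => heq p)] at h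
  have hcirc : (∫ θ in (0:ℝ)..(2 * Real.pi),
      ((Real.cos θ ^ 2 + Real.sin θ ^ 2) ^ 2 : ℝ)) = 2 * Real.pi := by
    rw [intervalIntegral.integral_congr
      (g := fun _ => (1:ℝ)) (fun θ _ => by simp [Real.cos_sq_add_sin_sq])]
    rw [intervalIntegral.integral_const]
    simp
  rw [hcirc, integral_const_mul] at h
  linarith

/-! ### `τ` in terms of the primitive -/

lemma tau_eq_neg {g : SympD} {F : ℝ × ℝ → ℝ} (hF : IsPrimitive g F) :
    tau g = - F (0, 0) := by
  obtain ⟨⟨U, hU, hDU, hsm⟩, hder, hnorm⟩ := hF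
  have hEq : Set.EqOn
      (fun t : ℝ => (1 / 2) *
        ((g.toFun (t, 0)).1 * (fderiv ℝ g.toFun (t, 0) (1, 0)).2
          - (g.toFun (t, 0)).2 * (fderiv ℝ g.toFun (t, 0) (1, 0)).1))
      (fun t : ℝ => fderiv ℝ F (t, 0) ((1 : ℝ), (0 : ℝ)))
      (Set.uIcc (0:ℝ) 1) := by
    intro t ht
    rw [Set.uIcc_of_le (by norm_num : (0:ℝ) ≤ 1)] at ht
    have hD : ((t, 0) : ℝ × ℝ) ∈ Disk := seg_mem_disk ht.1 ht.2
    have := hder (t, 0) hD (1, 0)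
    simp only at this ⊢
    rw [this]
    norm_num
  rw [tau, intervalIntegral.integral_congr hEq]
  have hstep : ∀ t ∈ Set.uIcc (0:ℝ) 1, HasDerivAt (fun t : ℝ => F (t, 0))
      (fderiv ℝ F (t, 0) ((1 : ℝ), (0 : ℝ))) t := by
    intro t ht
    rw [Set.uIcc_of_le (by norm_num : (0:ℝ) ≤ 1)] at ht
    have hD : ((t, 0) : ℝ × ℝ) ∈ Disk := seg_mem_disk ht.1 ht.2
    have hFd : HasFDerivAt F (fderiv ℝ F (t, 0)) (t, 0) :=
      (diffAt_of_contDiffOn hU hsm (hDU hD)).hasFDerivAt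
    have hline : HasDerivAt (fun t : ℝ => ((t, 0) : ℝ × ℝ)) ((1, 0) : ℝ × ℝ) t :=
      (hasDerivAt_id t).prodMk (hasDerivAt_const t 0)
    exact hFd.comp_hasDerivAt t hline
  have hint : IntervalIntegrable (fun t : ℝ => fderiv ℝ F (t, 0) ((1 : ℝ), (0 : ℝ)))
      volume 0 1 := by
    apply ContinuousOn.intervalIntegrable
    have hfc : ContinuousOn (fderiv ℝ F) U :=
      hsm.continuousOn_fderiv_of_isOpen hU (by norm_num)
    apply ContinuousOn.clm_apply _ continuousOn_const
    refine ContinuousOn.comp (f := fun t : ℝ => ((t, 0) : ℝ × ℝ)) hfc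
      (Continuous.continuousOn (by fun_prop)) ?_
    intro t ht
    rw [Set.uIcc_of_le (by norm_num : (0:ℝ) ≤ 1)] at ht
    exact hDU (seg_mem_disk ht.1 ht.2)
  rw [intervalIntegral.integral_eq_sub_of_hasDerivAt hstep hint, hnorm]
  ring

/-! ### `τ₀ + κ` in terms of the primitive -/

lemma tau0_add_kappa {g : SympD} {F : ℝ × ℝ → ℝ} (hF : IsPrimitive g F) :
    tau0 g + kappaOf F = - ∫ p in Disk, F p := by
  obtain ⟨⟨U, hU, hDU, hsm⟩, hder, hnorm⟩ := hF
  have hgreen := green hU hDU hsm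
  have h1 : tau0 g = ∫ p in Disk, (1 / 2 : ℝ) * fderiv ℝ F p p := by
    rw [tau0]
    apply setIntegral_congr_fun measurableSet_disk
    intro p hp
    have hvp := hder p hp p
    have hp' : p = p.1 • ((1, 0) : ℝ × ℝ) + p.2 • ((0, 1) : ℝ × ℝ) := by
      simp [Prod.ext_iff]
    have hdec : fderiv ℝ g.toFun p p
        = p.1 • fderiv ℝ g.toFun p (1, 0) + p.2 • fderiv ℝ g.toFun p (0, 1) := by
      calc fderiv ℝ g.toFun p p
          = fderiv ℝ g.toFun p (p.1 • ((1, 0) : ℝ × ℝ) + p.2 • ((0, 1) : ℝ × ℝ)) := by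
            rw [← hp']
        _ = _ := by
            rw [ContinuousLinearMap.map_add, ContinuousLinearMap.map_smul,
              ContinuousLinearMap.map_smul]
    have hdec1 : (fderiv ℝ g.toFun p p).1
        = p.1 * (fderiv ℝ g.toFun p (1, 0)).1 + p.2 * (fderiv ℝ g.toFun p (0, 1)).1 := by
      rw [hdec]; simp
    have hdec2 : (fderiv ℝ g.toFun p p).2
        = p.1 * (fderiv ℝ g.toFun p (1, 0)).2 + p.2 * (fderiv ℝ g.toFun p (0, 1)).2 := by
      rw [hdec]; simp
    simp only
    rw [hvp, hdec1, hdec2]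
    ring
  have hFc : ContinuousOn F Disk := hsm.continuousOn.mono hDU
  have hdFc : ContinuousOn (fun p : ℝ × ℝ => fderiv ℝ F p p) Disk := by
    apply ContinuousOn.clm_apply _ continuousOn_id
    exact (hsm.continuousOn_fderiv_of_isOpen hU (by norm_num)).mono hDU
  have iF : IntegrableOn F Disk := hFc.integrableOn_compact isCompact_disk
  have idF : IntegrableOn (fun p : ℝ × ℝ => fderiv ℝ F p p) Disk :=
    hdFc.integrableOn_compact isCompact_disk
  have hsplit : (∫ p in Disk, (2 * F p + fderiv ℝ F p p))
      = 2 * (∫ p in Disk, F p) + ∫ p in Disk, fderiv ℝ F p p := by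
    rw [integral_add (iF.const_mul 2) idF, integral_const_mul]
  rw [hsplit] at hgreen
  rw [h1, integral_const_mul, kappaOf]
  linarith

/-! ### Change of variables: area-preserving maps preserve integrals over the disk -/

lemma sympD_image (h : SympD) : h.toFun '' Disk = Disk := by
  apply Set.Subset.antisymm
  · exact h.mapsTo.image_subset
  · intro p hp
    exact ⟨h.invFun p, h.invMapsTo hp, h.rightInv p hp⟩

lemma sympD_injOn (h : SympD) : Set.InjOn h.toFun Disk := by
  intro p hp q hq hpq
  rw [← h.leftInv p hp, hpq, h.leftInv q hq]

lemma sympD_det (h : SympD) {p : ℝ × ℝ} (hp : p ∈ Disk) : (fderiv ℝ h.toFun p).det = 1 := by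
  rw [clm_det]
  exact h.areaPreserving p hp

lemma integral_comp_sympD (h : SympD) (F : ℝ × ℝ → ℝ) :
    ∫ p in Disk, F (h.toFun p) = ∫ p in Disk, F p := by
  have key := integral_image_eq_integral_abs_det_fderiv_smul volume measurableSet_disk
    (fun p hp => (h.diffAt hp).hasFDerivAt.hasFDerivWithinAt) (sympD_injOn h) F
  rw [sympD_image] at key
  rw [key]
  apply setIntegral_congr_fun measurableSet_disk
  intro p hp
  dsimp only
  rw [sympD_det h hp]
  simp

/-! ### The cocycle identity for primitives -/

lemma cocycle {g h gh : SympD} {Fg Fh Fgh : ℝ × ℝ → ℝ}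
    (hPg : IsPrimitive g Fg) (hPh : IsPrimitive h Fh) (hPgh : IsPrimitive gh Fgh)
    (hcomp : IsComp g h gh) :
    ∀ p ∈ Disk, Fgh p = Fg (h.toFun p) + Fh p - Fg (h.toFun (1, 0)) := by
  obtain ⟨Ug, hUg, hDUg, hsmg⟩ := hPg.1
  obtain ⟨Uh, hUh, hDUh, hsmh⟩ := hPh.1
  obtain ⟨Ugh, hUgh, hDUgh, hsmgh⟩ := hPgh.1
  set Φ : ℝ × ℝ → ℝ := fun p => Fgh p - Fg (h.toFun p) - Fh p with hΦdef
  have hzero : ∀ x ∈ OpenDisk, HasFDerivWithinAt Φ (0 : (ℝ × ℝ) →L[ℝ] ℝ) OpenDisk x := by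
    intro x hx
    have hxD : x ∈ Disk := openDisk_subset hx
    have hhx : h.toFun x ∈ Disk := h.mapsTo hxD
    have hd1 : HasFDerivAt Fgh (fderiv ℝ Fgh x) x :=
      (diffAt_of_contDiffOn hUgh hsmgh (hDUgh hxD)).hasFDerivAt
    have hdh : HasFDerivAt h.toFun (fderiv ℝ h.toFun x) x := (h.diffAt hxD).hasFDerivAt
    have hdFg : HasFDerivAt Fg (fderiv ℝ Fg (h.toFun x)) (h.toFun x) :=
      (diffAt_of_contDiffOn hUg hsmg (hDUg hhx)).hasFDerivAt
    have hdFh : HasFDerivAt Fh (fderiv ℝ Fh x) x :=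
      (diffAt_of_contDiffOn hUh hsmh (hDUh hxD)).hasFDerivAt
    have hd2 : HasFDerivAt (fun p => Fg (h.toFun p))
        ((fderiv ℝ Fg (h.toFun x)).comp (fderiv ℝ h.toFun x)) x := hdFg.comp x hdh
    have hkey : fderiv ℝ Fgh x
        = (fderiv ℝ Fg (h.toFun x)).comp (fderiv ℝ h.toFun x) + fderiv ℝ Fh x := by
      have hev : gh.toFun =ᶠ[nhds x] (fun p => g.toFun (h.toFun p)) := by
        filter_upwards [isOpen_openDisk.mem_nhds hx] with p hp
        exact hcomp p (openDisk_subset hp)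
      have hgd : HasFDerivAt g.toFun (fderiv ℝ g.toFun (h.toFun x)) (h.toFun x) :=
        (g.diffAt hhx).hasFDerivAt
      have hcompd : fderiv ℝ gh.toFun x
          = (fderiv ℝ g.toFun (h.toFun x)).comp (fderiv ℝ h.toFun x) := by
        rw [hev.fderiv_eq]
        exact (hgd.comp x hdh).fderiv
      apply ContinuousLinearMap.ext
      intro v
      rw [ContinuousLinearMap.add_apply, ContinuousLinearMap.coe_comp', Function.comp_apply]
      rw [hPgh.2.1 x hxD v, hPg.2.1 (h.toFun x) hhx (fderiv ℝ h.toFun x v),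
        hPh.2.1 x hxD v, hcompd]
      have hghx : gh.toFun x = g.toFun (h.toFun x) := hcomp x hxD
      rw [hghx]
      simp only [ContinuousLinearMap.coe_comp', Function.comp_apply]
      ring
    have hΦd : HasFDerivAt Φ (fderiv ℝ Fgh x
        - (fderiv ℝ Fg (h.toFun x)).comp (fderiv ℝ h.toFun x) - fderiv ℝ Fh x) x :=
      (hd1.sub hd2).sub hdFh
    have h0 : fderiv ℝ Fgh x
        - (fderiv ℝ Fg (h.toFun x)).comp (fderiv ℝ h.toFun x) - fderiv ℝ Fh x
        = (0 : (ℝ × ℝ) →L[ℝ] ℝ) := by rw [hkey]; abel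
    rw [h0] at hΦd
    exact hΦd.hasFDerivWithinAt
  have h00 : ((0:ℝ), (0:ℝ)) ∈ OpenDisk := by
    show (0:ℝ)^2 + (0:ℝ)^2 < 1; norm_num
  have hconst : ∀ x ∈ OpenDisk, Φ x = Φ (0, 0) := by
    intro x hx
    have hb := Convex.norm_image_sub_le_of_norm_hasFDerivWithin_le (C := 0) hzero
      (fun y _ => le_of_eq norm_zero) convex_openDisk h00 hx
    rw [mul_comm, mul_zero] at hb
    have := norm_le_zero_iff.mp hb
    have := sub_eq_zero.mp this
    exact this
  have hcontΦ : ∀ p ∈ Disk, ContinuousAt Φ p := by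
    intro p hp
    have c1 : ContinuousAt Fgh p :=
      (diffAt_of_contDiffOn hUgh hsmgh (hDUgh hp)).continuousAt
    have c2 : ContinuousAt (fun q => Fg (h.toFun q)) p :=
      ContinuousAt.comp
        (diffAt_of_contDiffOn hUg hsmg (hDUg (h.mapsTo hp))).continuousAt
        (h.contAt hp)
    have c3 : ContinuousAt Fh p :=
      (diffAt_of_contDiffOn hUh hsmh (hDUh hp)).continuousAt
    exact (c1.sub c2).sub c3
  have hDconst : ∀ p ∈ Disk, Φ p = Φ (0, 0) := by
    intro p hp
    have h1 : Filter.Tendsto (fun n : ℕ => (1 - 1/(n+1) : ℝ)) Filter.atTop (nhds 1) := by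
      have h2 := tendsto_one_div_add_atTop_nhds_zero_nat (𝕜 := ℝ)
      have := tendsto_const_nhds (x := (1:ℝ)) (f := Filter.atTop (α := ℕ)) |>.sub h2
      simpa using this
    have hseq : Filter.Tendsto (fun n : ℕ => ((1 - 1/(n+1) : ℝ)) • p)
        Filter.atTop (nhds p) := by
      have := h1.smul_const p
      simpa using this
    have hmem : ∀ n : ℕ, ((1 - 1/(n+1) : ℝ)) • p ∈ OpenDisk := by
      intro n
      have hpos : (0:ℝ) < 1/(n+1) := by positivity
      have hle : (1/(n+1) : ℝ) ≤ 1 := by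
        rw [div_le_one (by positivity)]
        simp
      have hpD : p.1 ^ 2 + p.2 ^ 2 ≤ 1 := hp
      show ((1 - 1/(n+1) : ℝ) • p).1 ^ 2 + ((1 - 1/(n+1) : ℝ) • p).2 ^ 2 < 1
      simp only [Prod.smul_fst, Prod.smul_snd, smul_eq_mul]
      have key : (1 - 1/(n+1) : ℝ)^2 < 1 := by nlinarith
      nlinarith [key, hpD, sq_nonneg (1 - 1/(n+1) : ℝ)]
    have hlim := (hcontΦ p hp).tendsto.comp hseq
    have hΦseq : (fun n : ℕ => Φ (((1 - 1/(n+1) : ℝ)) • p)) = fun _ => Φ (0, 0) :=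
      funext fun n => hconst _ (hmem n)
    rw [show (Φ ∘ fun n : ℕ => ((1 - 1/(n+1) : ℝ)) • p) =
      (fun n : ℕ => Φ (((1 - 1/(n+1) : ℝ)) • p)) from rfl, hΦseq] at hlim
    exact tendsto_nhds_unique hlim tendsto_const_nhds
  intro p hp
  have e1 := hDconst p hp
  have e2 := hDconst (1, 0) one_zero_mem_disk
  have hn1 : Fgh (1, 0) = 0 := hPgh.2.2
  have hn2 : Fh (1, 0) = 0 := hPh.2.2
  simp only [hΦdef] at e1 e2
  rw [hn1, hn2] at e2
  linarith [e1, e2]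

/-! ### Helper continuity lemmas -/

lemma primitive_contOn {g : SympD} {F : ℝ × ℝ → ℝ} (hF : IsPrimitive g F) :
    ContinuousOn F Disk :=
  fun p hp => (primitive_contAt hF hp).continuousWithinAt

lemma SympD.contOn (g : SympD) : ContinuousOn g.toFun Disk :=
  fun p hp => (g.contAt hp).continuousWithinAt

/-! ### The homomorphism property -/

lemma hom_part {g h gh : SympD} {Fg Fh Fgh : ℝ × ℝ → ℝ}
    (hh0 : FixesOrigin h) (hcomp : IsComp g h gh)
    (hPg : IsPrimitive g Fg) (hPh : IsPrimitive h Fh) (hPgh : IsPrimitive gh Fgh) :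
    Real.pi * tau gh - (tau0 gh + kappaOf Fgh)
      = (Real.pi * tau g - (tau0 g + kappaOf Fg))
        + (Real.pi * tau h - (tau0 h + kappaOf Fh)) := by
  have co := cocycle hPg hPh hPgh hcomp
  have hqD : h.toFun (1, 0) ∈ Disk := h.mapsTo one_zero_mem_disk
  have t1 : tau gh = - Fgh (0, 0) := tau_eq_neg hPgh
  have t2 : tau g = - Fg (0, 0) := tau_eq_neg hPg
  have t3 : tau h = - Fh (0, 0) := tau_eq_neg hPh
  have k1 : tau0 gh + kappaOf Fgh = - ∫ p in Disk, Fgh p := tau0_add_kappa hPgh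
  have k2 : tau0 g + kappaOf Fg = - ∫ p in Disk, Fg p := tau0_add_kappa hPg
  have k3 : tau0 h + kappaOf Fh = - ∫ p in Disk, Fh p := tau0_add_kappa hPh
  have h00 : h.toFun (0, 0) = (0, 0) := hh0
  have e0 : Fgh (0, 0) = Fg (0, 0) + Fh (0, 0) - Fg (h.toFun (1, 0)) := by
    have := co _ zero_mem_disk
    rwa [h00] at this
  -- split the integral of `Fgh`
  have i1 : IntegrableOn (fun p => Fg (h.toFun p)) Disk := by
    apply ContinuousOn.integrableOn_compact isCompact_disk
    exact (primitive_contOn hPg).comp h.contOn h.mapsTo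
  have i2 : IntegrableOn Fh Disk :=
    (primitive_contOn hPh).integrableOn_compact isCompact_disk
  have hIgh : ∫ p in Disk, Fgh p
      = (∫ p in Disk, Fg p) + (∫ p in Disk, Fh p) - Real.pi * Fg (h.toFun (1, 0)) := by
    rw [setIntegral_congr_fun measurableSet_disk
      (g := fun p => Fg (h.toFun p) + Fh p - Fg (h.toFun (1, 0))) (fun p hp => co p hp)]
    have i12 : IntegrableOn (fun p : ℝ × ℝ => Fg (h.toFun p) + Fh p) Disk := i1.add i2
    rw [integral_sub i12 ((continuous_const.continuousOn).integrableOn_compact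
      isCompact_disk), integral_add i1 i2, integral_const_disk,
      integral_comp_sympD h Fg]
  rw [t1, t2, t3, k1, k2, k3, e0, hIgh]
  ring

/-! ### The twist maps -/

def twist (a : ℝ) : ℝ × ℝ → ℝ × ℝ := fun p =>
  (p.1 * Real.cos (a * (p.1 ^ 2 + p.2 ^ 2)) - p.2 * Real.sin (a * (p.1 ^ 2 + p.2 ^ 2)),
   p.1 * Real.sin (a * (p.1 ^ 2 + p.2 ^ 2)) + p.2 * Real.cos (a * (p.1 ^ 2 + p.2 ^ 2)))

lemma twist_rsq (a : ℝ) (p : ℝ × ℝ) :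
    (twist a p).1 ^ 2 + (twist a p).2 ^ 2 = p.1 ^ 2 + p.2 ^ 2 := by
  simp only [twist]
  linear_combination (p.1 ^ 2 + p.2 ^ 2) * Real.sin_sq_add_cos_sq (a * (p.1 ^ 2 + p.2 ^ 2))

lemma twist_inv (a : ℝ) (p : ℝ × ℝ) : twist (-a) (twist a p) = p := by
  obtain ⟨x, y⟩ := p
  have hr := twist_rsq a (x, y)
  have hcs := Real.sin_sq_add_cos_sq (a * (x ^ 2 + y ^ 2))
  simp only [twist] at hr ⊢
  rw [hr]
  rw [show (-a) * (x ^ 2 + y ^ 2) = -(a * (x ^ 2 + y ^ 2)) from by ring,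
    Real.cos_neg, Real.sin_neg]
  apply Prod.ext
  · simp only
    linear_combination x * hcs
  · simp only
    linear_combination y * hcs

lemma contDiff_twist (a : ℝ) : ContDiff ℝ (⊤:ℕ∞) (twist a) := by
  unfold twist
  have hw : ContDiff ℝ (⊤:ℕ∞) (fun p : ℝ × ℝ => a * (p.1 ^ 2 + p.2 ^ 2)) := by fun_prop
  have hc := Real.contDiff_cos.comp hw
  have hs := Real.contDiff_sin.comp hw
  exact ((contDiff_fst.mul hc).sub (contDiff_snd.mul hs)).prodMk
    ((contDiff_fst.mul hs).add (contDiff_snd.mul hc))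

lemma smul_row (c a b : ℝ) : c • row a b = row (c * a) (c * b) := by
  apply ContinuousLinearMap.ext
  intro v
  simp [row]
  ring

lemma hasFDerivAt_twist (a : ℝ) (p : ℝ × ℝ) :
    HasFDerivAt (twist a)
      ((row (Real.cos (a * (p.1 ^ 2 + p.2 ^ 2))
              - 2 * a * p.1 * (p.1 * Real.sin (a * (p.1 ^ 2 + p.2 ^ 2))
                + p.2 * Real.cos (a * (p.1 ^ 2 + p.2 ^ 2))))
            (-(Real.sin (a * (p.1 ^ 2 + p.2 ^ 2)))
              - 2 * a * p.2 * (p.1 * Real.sin (a * (p.1 ^ 2 + p.2 ^ 2))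
                + p.2 * Real.cos (a * (p.1 ^ 2 + p.2 ^ 2))))).prod
        (row (Real.sin (a * (p.1 ^ 2 + p.2 ^ 2))
              + 2 * a * p.1 * (p.1 * Real.cos (a * (p.1 ^ 2 + p.2 ^ 2))
                - p.2 * Real.sin (a * (p.1 ^ 2 + p.2 ^ 2))))
            (Real.cos (a * (p.1 ^ 2 + p.2 ^ 2))
              + 2 * a * p.2 * (p.1 * Real.cos (a * (p.1 ^ 2 + p.2 ^ 2))
                - p.2 * Real.sin (a * (p.1 ^ 2 + p.2 ^ 2)))))) p := by
  set w := a * (p.1 ^ 2 + p.2 ^ 2) with hwdef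
  have hw : HasFDerivAt (fun q : ℝ × ℝ => a * (q.1 ^ 2 + q.2 ^ 2))
      (row (2 * a * p.1) (2 * a * p.2)) p := by
    have := (hasFDerivAt_rsq p).const_mul a
    rwa [smul_row, show a * (2 * p.1) = 2 * a * p.1 from by ring,
      show a * (2 * p.2) = 2 * a * p.2 from by ring] at this
  have hcos : HasFDerivAt (fun q : ℝ × ℝ => Real.cos (a * (q.1 ^ 2 + q.2 ^ 2)))
      ((-Real.sin w) • row (2 * a * p.1) (2 * a * p.2)) p :=
    by have := (Real.hasDerivAt_cos w).comp_hasFDerivAt p hw; exact this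
  have hsin : HasFDerivAt (fun q : ℝ × ℝ => Real.sin (a * (q.1 ^ 2 + q.2 ^ 2)))
      ((Real.cos w) • row (2 * a * p.1) (2 * a * p.2)) p :=
    by have := (Real.hasDerivAt_sin w).comp_hasFDerivAt p hw; exact this
  have h1 : HasFDerivAt (fun q : ℝ × ℝ => q.1) (ContinuousLinearMap.fst ℝ ℝ ℝ) p :=
    hasFDerivAt_fst
  have h2 : HasFDerivAt (fun q : ℝ × ℝ => q.2) (ContinuousLinearMap.snd ℝ ℝ ℝ) p :=
    hasFDerivAt_snd
  have hf1 := (h1.mul hcos).sub (h2.mul hsin)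
  have hf2 := (h1.mul hsin).add (h2.mul hcos)
  have hprod := hf1.prodMk hf2
  have hclm1 : p.1 • ((-Real.sin w) • row (2 * a * p.1) (2 * a * p.2))
        + Real.cos w • ContinuousLinearMap.fst ℝ ℝ ℝ
        - (p.2 • ((Real.cos w) • row (2 * a * p.1) (2 * a * p.2))
          + Real.sin w • ContinuousLinearMap.snd ℝ ℝ ℝ)
      = row (Real.cos w - 2 * a * p.1 * (p.1 * Real.sin w + p.2 * Real.cos w))
          (-(Real.sin w) - 2 * a * p.2 * (p.1 * Real.sin w + p.2 * Real.cos w)) := by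
    apply ContinuousLinearMap.ext
    intro v
    simp [row]
    ring
  have hclm2 : p.1 • ((Real.cos w) • row (2 * a * p.1) (2 * a * p.2))
        + Real.sin w • ContinuousLinearMap.fst ℝ ℝ ℝ
        + (p.2 • ((-Real.sin w) • row (2 * a * p.1) (2 * a * p.2))
          + Real.cos w • ContinuousLinearMap.snd ℝ ℝ ℝ)
      = row (Real.sin w + 2 * a * p.1 * (p.1 * Real.cos w - p.2 * Real.sin w))
          (Real.cos w + 2 * a * p.2 * (p.1 * Real.cos w - p.2 * Real.sin w)) := by
    apply ContinuousLinearMap.ext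
    intro v
    simp [row]
    ring
  rw [hclm1, hclm2] at hprod
  exact hprod

def twistD (a : ℝ) : SympD where
  toFun := twist a
  invFun := twist (-a)
  mapsTo := by
    intro p hp
    rw [mem_disk] at hp ⊢
    rw [twist_rsq]
    exact hp
  invMapsTo := by
    intro p hp
    rw [mem_disk] at hp ⊢
    rw [twist_rsq]
    exact hp
  leftInv := fun p _ => twist_inv a p
  rightInv := fun p _ => by
    have := twist_inv (-a) p
    rwa [neg_neg] at this
  smooth := ⟨Set.univ, isOpen_univ, Set.subset_univ _, (contDiff_twist a).contDiffOn⟩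
  invSmooth := ⟨Set.univ, isOpen_univ, Set.subset_univ _, (contDiff_twist (-a)).contDiffOn⟩
  areaPreserving := by
    intro p _
    rw [(hasFDerivAt_twist a p).fderiv]
    simp only [ContinuousLinearMap.prod_apply, row_apply, mul_one, mul_zero, add_zero, zero_add]
    linear_combination Real.sin_sq_add_cos_sq (a * (p.1 ^ 2 + p.2 ^ 2))

def Ftw (a : ℝ) : ℝ × ℝ → ℝ := fun p => a / 4 * ((p.1 ^ 2 + p.2 ^ 2) ^ 2 - 1)

lemma hasFDerivAt_Ftw (a : ℝ) (p : ℝ × ℝ) :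
    HasFDerivAt (Ftw a)
      (row (a * (p.1 ^ 2 + p.2 ^ 2) * p.1) (a * (p.1 ^ 2 + p.2 ^ 2) * p.2)) p := by
  have h := ((hasFDerivAt_rsq_sq p).sub_const 1).const_mul (a / 4)
  have hclm : (a / 4) • ((2 * (p.1 ^ 2 + p.2 ^ 2)) • row (2 * p.1) (2 * p.2))
      = row (a * (p.1 ^ 2 + p.2 ^ 2) * p.1) (a * (p.1 ^ 2 + p.2 ^ 2) * p.2) := by
    rw [smul_row, smul_row]
    congr 1 <;> ring
  rw [hclm] at h
  exact h

lemma primitive_twist (a : ℝ) : IsPrimitive (twistD a) (Ftw a) := by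
  refine ⟨⟨Set.univ, isOpen_univ, Set.subset_univ _,
    ContDiff.contDiffOn (by unfold Ftw; fun_prop)⟩, ?_, by simp [Ftw]⟩
  intro p _ v
  rw [(hasFDerivAt_Ftw a p).fderiv]
  show _ = 1 / 2 * ((twist a p).1 * (fderiv ℝ (twist a) p v).2
      - (twist a p).2 * (fderiv ℝ (twist a) p v).1) - 1 / 2 * (p.1 * v.2 - p.2 * v.1)
  rw [(hasFDerivAt_twist a p).fderiv]
  simp only [ContinuousLinearMap.prod_apply, row_apply, twist]
  linear_combination (-(a * (p.1 ^ 2 + p.2 ^ 2) * (p.1 * v.1 + p.2 * v.2))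
    - (1/2) * (p.1 * v.2 - p.2 * v.1)) * Real.sin_sq_add_cos_sq (a * (p.1 ^ 2 + p.2 ^ 2))

lemma twist_value (a : ℝ) :
    Real.pi * tau (twistD a) - (tau0 (twistD a) + kappaOf (Ftw a))
      = a * Real.pi / 12 := by
  rw [tau_eq_neg (primitive_twist a), tau0_add_kappa (primitive_twist a)]
  have hF00 : Ftw a (0, 0) = -(a / 4) := by
    simp [Ftw]
  have hint : (∫ p in Disk, Ftw a p) = a / 4 * (Real.pi / 3) - Real.pi * (a / 4) := by
    unfold Ftw
    have i1 : IntegrableOn (fun p : ℝ × ℝ => a / 4 * (p.1 ^ 2 + p.2 ^ 2) ^ 2) Disk := by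
      apply ContinuousOn.integrableOn_compact isCompact_disk
      apply Continuous.continuousOn
      fun_prop
    have i2 : IntegrableOn (fun _ : ℝ × ℝ => a / 4) Disk :=
      (continuous_const.continuousOn).integrableOn_compact isCompact_disk
    rw [setIntegral_congr_fun measurableSet_disk
      (g := fun p : ℝ × ℝ => a / 4 * (p.1 ^ 2 + p.2 ^ 2) ^ 2 - a / 4)
      (fun p _ => by ring)]
    rw [integral_sub i1 i2, integral_const_mul, integral_rsq_sq_disk, integral_const_disk]
  rw [hF00, hint]
  ring

/-- the map `g ↦ π·τ(g) − τ'(g)` (with `τ' = τ₀ + κ`) is a surjective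
group homomorphism from `G` to `ℝ`. -/
theorem pi_tau_sub_tau'_surjective_hom :
    (∀ (g h gh : SympD) (Fg Fh Fgh : ℝ × ℝ → ℝ),
      FixesOrigin g → FixesOrigin h → IsComp g h gh →
      IsPrimitive g Fg → IsPrimitive h Fh → IsPrimitive gh Fgh →
      Real.pi * tau gh - (tau0 gh + kappaOf Fgh)
        = (Real.pi * tau g - (tau0 g + kappaOf Fg))
          + (Real.pi * tau h - (tau0 h + kappaOf Fh))) ∧
    (∀ s : ℝ, ∃ (g : SympD) (Fg : ℝ × ℝ → ℝ), FixesOrigin g ∧ IsPrimitive g Fg ∧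
      Real.pi * tau g - (tau0 g + kappaOf Fg) = s) := by
  constructor
  · intro g h gh Fg Fh Fgh _ hh0 hcomp hPg hPh hPgh
    exact hom_part hh0 hcomp hPg hPh hPgh
  · intro s
    refine ⟨twistD (12 * s / Real.pi), Ftw (12 * s / Real.pi), ?_, primitive_twist _, ?_⟩
    · show twist (12 * s / Real.pi) (0, 0) = (0, 0)
      simp [twist]
    · rw [twist_value]
      field_simp
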